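/- Let ρ be a density matrix and E, Π orthogonal projections on ℂⁿ with Re tr(ρ E Π) < 0 (so p_Π := tr(Π ρ) > 0). With Ẽ = I − E, N^s_x = G_s(x−1)·E + G_s(x)·Ẽ, p^s_− := (1/p_Π) ∫_{−∞}^{0} tr((N^s_x)† Π N^s_x ρ) dx, and p^s_d := (1 − e^{−1/(4s²)})/2, there exists s₀ > 0 such that for all s ≥ s₀ one has p^s_− > 1/2 + p^s_d / p_Π. (This is condition 2c of the technical Lemma underlying Theorem 2: for large pointer spread, an anomalous negative weak value makes the conditional probability of a negative pointer reading exceed the bound satisfied by all outcome-deterministic measurement non-contextual models.) -/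

import Mathlib

open MeasureTheory Matrix Filter
open scoped ComplexOrder

/-- The Gaussian pointer wavefunction with spread `s`:
`G_s(x) = (π s²)^(−1/4) exp(−x²/(2 s²))`. -/
noncomputable def G (s x : ℝ) : ℝ :=
  (Real.pi * s ^ 2) ^ (-(1 / 4 : ℝ)) * Real.exp (-x ^ 2 / (2 * s ^ 2))

/-- The Kraus operators of the Gaussian pointer measurement of the projection `E`
with pointer spread `s`: `N^s_x = G_s(x−1)·E + G_s(x)·(I − E)`. -/
noncomputable def Ns {n : ℕ} (E : Matrix (Fin n) (Fin n) ℂ) (s x : ℝ) :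
    Matrix (Fin n) (Fin n) ℂ :=
  (G s (x - 1) : ℂ) • E + (G s x : ℂ) • (1 - E)

/-- The disturbance probability `p^s_d = (1 − e^{−1/(4s²)})/2`. -/
noncomputable def pd (s : ℝ) : ℝ := (1 - Real.exp (-1 / (4 * s ^ 2))) / 2

/-- The conditional probability of a negative pointer reading given successful
post-selection: `p^s_− = (1/p_P) ∫_{−∞}^{0} tr((N^s_x)† P N^s_x ρ) dx`, where
`p_P = tr(P ρ)`. -/
noncomputable def pminus {n : ℕ} (ρ E P : Matrix (Fin n) (Fin n) ℂ) (s : ℝ) : ℝ :=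
  (1 / (Matrix.trace (P * ρ)).re)
    * ∫ x in Set.Iio (0 : ℝ), (Matrix.trace ((Ns E s x)ᴴ * P * Ns E s x * ρ)).re

/-! Write `a`, `b`, `c` for the real parts of `tr(EPEρ)`, `tr(EP(1-E)ρ)`, `tr((1-E)P(1-E)ρ)`,
so that `p_P = a + 2b + c` and `Re tr(ρEP) = a + b`. Since `G_s(x-1) G_s(x)` is `e^{-1/(4s²)}`
times the Gaussian square centred at `1/2`, the numerator of `p^s_-` is
`a K_s(1) + 2b e^{-1/(4s²)} K_s(1/2) + c/2`, where `K_s(μ) = negReadingProb s μ` is the mass on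
`(-∞, 0)` of the normal density `G_s(x-μ)²` (mean `μ`, standard deviation `s/√2`). As `s → ∞`,
`s (K_s(μ) - 1/2) → -μ/√π` and `s p^s_d → 0`, hence
`s (p_P p^s_- - p_P/2 - p^s_d) → -(a + b)/√π > 0`. -/

open Real Set Topology

lemma G_sq {s : ℝ} (hs : 0 < s) (y : ℝ) :
    G s y ^ 2 = (√π * s)⁻¹ * exp (-(s ^ 2)⁻¹ * y ^ 2) := by
  have hπs : (0 : ℝ) ≤ π * s ^ 2 := by positivity
  have hpow : ((π * s ^ 2) ^ (-(1 / 4 : ℝ))) ^ 2 = (√π * s)⁻¹ := by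
    rw [← rpow_natCast, ← rpow_mul hπs, show -(1 / 4 : ℝ) * (2 : ℕ) = -(1 / 2) by norm_num,
      rpow_neg hπs, ← sqrt_eq_rpow, sqrt_mul pi_pos.le, sqrt_sq hs.le]
  rw [G, mul_pow, hpow, ← exp_nat_mul]
  congr 2
  ring

lemma G_sub_one_mul_G (s x : ℝ) :
    G s (x - 1) * G s x = exp (-1 / (4 * s ^ 2)) * G s (x - 1 / 2) ^ 2 := by
  have hexp : exp (-(x - 1) ^ 2 / (2 * s ^ 2)) * exp (-x ^ 2 / (2 * s ^ 2))
      = exp (-1 / (4 * s ^ 2)) * exp (-(x - 1 / 2) ^ 2 / (2 * s ^ 2)) ^ 2 := by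
    rw [← exp_add, sq (exp _), ← exp_add, ← exp_add]
    ring_nf
  simp only [G]
  linear_combination ((π * s ^ 2) ^ (-(1 / 4 : ℝ))) ^ 2 * hexp

lemma integrable_G_sq {s : ℝ} (hs : 0 < s) : Integrable fun y => G s y ^ 2 := by
  simp_rw [G_sq hs]
  exact (integrable_exp_neg_mul_sq (by positivity)).const_mul _

lemma integral_Iio_zero_G_sq {s : ℝ} (hs : 0 < s) : ∫ y in Iio 0, G s y ^ 2 = 1 / 2 := by
  have hsymm : ∫ y in Iio 0, G s y ^ 2 = ∫ y in Ioi 0, G s y ^ 2 := by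
    rw [← integral_Iic_eq_integral_Iio, ← neg_zero, ← integral_comp_neg_Ioi]
    simp [G]
  rw [hsymm]
  simp_rw [G_sq hs]
  rw [integral_const_mul, integral_gaussian_Ioi, div_inv_eq_mul, sqrt_mul pi_pos.le,
    sqrt_sq hs.le]
  field_simp

noncomputable def negReadingProb (s μ : ℝ) : ℝ := ∫ x in Iio 0, G s (x - μ) ^ 2

lemma negReadingProb_eq_integral_Iio (s μ : ℝ) :
    negReadingProb s μ = ∫ y in Iio (-μ), G s y ^ 2 := by
  have hpre : (· - μ) ⁻¹' Iio (-μ) = Iio 0 := by ext x; simp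
  rw [negReadingProb, ← hpre]
  exact (measurePreserving_sub_right volume μ).setIntegral_preimage_emb
    (measurableEmbedding_subRight μ) (fun y => G s y ^ 2) _

lemma half_sub_negReadingProb {s : ℝ} (hs : 0 < s) (μ : ℝ) :
    1 / 2 - negReadingProb s μ = ∫ y in -μ..0, G s y ^ 2 := by
  rw [negReadingProb_eq_integral_Iio, ← integral_Iio_zero_G_sq hs,
    ← integral_Iic_eq_integral_Iio, ← integral_Iic_eq_integral_Iio,
    intervalIntegral.integral_Iic_sub_Iic (integrable_G_sq hs).integrableOn
      (integrable_G_sq hs).integrableOn]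

lemma tendsto_mul_negReadingProb_sub_half (μ : ℝ) :
    Tendsto (fun s => s * (negReadingProb s μ - 1 / 2)) atTop (𝓝 (-(μ / √π))) := by
  set F : ℝ → ℝ := fun t => ∫ y in -μ..0, exp (-(t * y) ^ 2)
  have hF : Continuous F :=
    intervalIntegral.continuous_parametric_intervalIntegral_of_continuous' (by fun_prop) _ _
  have hF0 : F 0 = μ := by simp [F]
  have hFs : ∀ s > 0, s * (negReadingProb s μ - 1 / 2) = -(F s⁻¹ / √π) := by
    intro s hs
    rw [← neg_sub, half_sub_negReadingProb hs]
    simp_rw [G_sq hs, intervalIntegral.integral_const_mul, F, mul_pow, inv_pow, neg_mul]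
    field_simp
  have hlim : Tendsto (fun s : ℝ => F s⁻¹) atTop (𝓝 μ) :=
    hF0 ▸ (hF.tendsto 0).comp tendsto_inv_atTop_zero
  exact ((hlim.div_const _).neg).congr' <|
    (eventually_gt_atTop 0).mono fun s hs => (hFs s hs).symm

lemma tendsto_exp_neg_one_div_four_mul_sq :
    Tendsto (fun s : ℝ => exp (-1 / (4 * s ^ 2))) atTop (𝓝 1) := by
  have h : Tendsto (fun s : ℝ => -1 / (4 * s ^ 2)) atTop (𝓝 0) :=
    tendsto_const_nhds.div_atTop <| (tendsto_pow_atTop two_ne_zero).const_mul_atTop (by norm_num)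
  have := (continuous_exp.tendsto 0).comp h
  rwa [exp_zero] at this

lemma tendsto_mul_pd : Tendsto (fun s => s * pd s) atTop (𝓝 0) := by
  have hbounds : ∀ s > 0, 0 ≤ s * pd s ∧ s * pd s ≤ (8 * s)⁻¹ := by
    intro s hs
    have hle_one : exp (-1 / (4 * s ^ 2)) ≤ 1 :=
      exp_le_one_iff.2 (div_nonpos_of_nonpos_of_nonneg (by norm_num) (by positivity))
    have hge := add_one_le_exp (-1 / (4 * s ^ 2))
    refine ⟨mul_nonneg hs.le (by rw [pd]; linarith), ?_⟩
    calc s * pd s ≤ s * (1 / (4 * s ^ 2) / 2) := by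
          rw [pd]; gcongr; linarith [neg_div (4 * s ^ 2) 1]
      _ = (8 * s)⁻¹ := by field_simp; norm_num
  exact tendsto_of_tendsto_of_tendsto_of_le_of_le' tendsto_const_nhds
    (tendsto_inv_atTop_zero.comp (tendsto_id.const_mul_atTop (by norm_num)))
    ((eventually_gt_atTop 0).mono fun s hs => (hbounds s hs).1)
    ((eventually_gt_atTop 0).mono fun s hs => (hbounds s hs).2)

lemma eventually_lt_negReadingProb_combination {a b : ℝ} (hab : a + b < 0) :
    ∀ᶠ s in atTop, a / 2 + b + pd s <
      a * negReadingProb s 1 + 2 * b * (exp (-1 / (4 * s ^ 2)) * negReadingProb s (1 / 2)) := by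
  have hlim : Tendsto (fun s => s * (a * negReadingProb s 1
      + 2 * b * (exp (-1 / (4 * s ^ 2)) * negReadingProb s (1 / 2)) - (a / 2 + b + pd s)))
      atTop (𝓝 (-((a + b) / √π))) := by
    have h := ((((tendsto_mul_negReadingProb_sub_half 1).const_mul a).add
      ((tendsto_exp_neg_one_div_four_mul_sq.mul
        (tendsto_mul_negReadingProb_sub_half (1 / 2))).const_mul (2 * b))).sub
      (tendsto_mul_pd.const_mul (2 * b + 1)))
    convert h using 1
    · ext s; simp only [pd]; ring
    · congr 1; ring
  have hpos : 0 < -((a + b) / √π) := neg_pos.2 (div_neg_of_neg_of_pos hab (by positivity))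
  filter_upwards [hlim.eventually (eventually_gt_nhds hpos), eventually_gt_atTop 0]
    with s hmul hs
  exact sub_pos.1 (pos_of_mul_pos_right hmul hs.le)

lemma re_trace_mul_mul_eq {n : ℕ} (ρ E P : Matrix (Fin n) (Fin n) ℂ) :
    (ρ * E * P).trace.re = (E * P * E * ρ).trace.re + (E * P * (1 - E) * ρ).trace.re := by
  have h : E * P * ρ = E * P * E * ρ + E * P * (1 - E) * ρ := by noncomm_ring
  rw [mul_assoc, trace_mul_comm, h, trace_add, Complex.add_re]

section Trace

variable {n : ℕ} {ρ E P : Matrix (Fin n) (Fin n) ℂ}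

lemma re_trace_conjTranspose_mul (hρ : ρ.IsHermitian) (M : Matrix (Fin n) (Fin n) ℂ) :
    (Mᴴ * ρ).trace.re = (M * ρ).trace.re := by
  rw [← hρ.eq, ← conjTranspose_mul, trace_conjTranspose, hρ.eq, trace_mul_comm]
  rfl

lemma re_trace_compl_mul_mul (hρ : ρ.IsHermitian) (hE : E.IsHermitian) (hP : P.IsHermitian) :
    ((1 - E) * P * E * ρ).trace.re = (E * P * (1 - E) * ρ).trace.re := by
  have h : (E * P * (1 - E))ᴴ = (1 - E) * P * E := by
    simp only [conjTranspose_mul, conjTranspose_sub, conjTranspose_one, hE.eq, hP.eq, mul_assoc]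
  rw [← h, re_trace_conjTranspose_mul hρ]

lemma Ns_isHermitian (hE : E.IsHermitian) (s x : ℝ) : (Ns E s x).IsHermitian :=
  (hE.smul (Complex.conj_ofReal _)).add ((isHermitian_one.sub hE).smul (Complex.conj_ofReal _))

lemma re_trace_Ns_mul_mul (hρ : ρ.IsHermitian) (hE : E.IsHermitian) (hP : P.IsHermitian)
    (s x : ℝ) :
    ((Ns E s x)ᴴ * P * Ns E s x * ρ).trace.re =
      G s (x - 1) ^ 2 * (E * P * E * ρ).trace.re
        + 2 * (G s (x - 1) * G s x) * (E * P * (1 - E) * ρ).trace.re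
        + G s x ^ 2 * ((1 - E) * P * (1 - E) * ρ).trace.re := by
  set α : ℂ := (G s (x - 1) : ℂ)
  set β : ℂ := (G s x : ℂ)
  have hexpand : (α • E + β • (1 - E)) * P * (α • E + β • (1 - E)) * ρ
      = (α * α) • (E * P * E * ρ) + (α * β) • (E * P * (1 - E) * ρ)
        + (β * α) • ((1 - E) * P * E * ρ) + (β * β) • ((1 - E) * P * (1 - E) * ρ) := by
    simp only [add_mul, mul_add, smul_mul_assoc, mul_smul_comm]
    module
  rw [(Ns_isHermitian hE s x).eq, Ns, hexpand]
  simp only [trace_add, trace_smul, smul_eq_mul, Complex.add_re, α, β, ← Complex.ofReal_mul,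
    Complex.re_ofReal_mul]
  rw [re_trace_compl_mul_mul hρ hE hP]
  ring

lemma re_trace_mul_eq (hρ : ρ.IsHermitian) (hE : E.IsHermitian) (hP : P.IsHermitian) :
    (P * ρ).trace.re = (E * P * E * ρ).trace.re + 2 * (E * P * (1 - E) * ρ).trace.re
      + ((1 - E) * P * (1 - E) * ρ).trace.re := by
  have h : P * ρ = E * P * E * ρ + E * P * (1 - E) * ρ + (1 - E) * P * E * ρ
      + (1 - E) * P * (1 - E) * ρ := by noncomm_ring
  rw [h, trace_add, trace_add, trace_add, Complex.add_re, Complex.add_re, Complex.add_re,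
    re_trace_compl_mul_mul hρ hE hP]
  ring

open scoped MatrixOrder in
lemma re_trace_mul_pos (hρ : ρ.PosSemidef) (hP : P.IsHermitian) (hP2 : P * P = P)
    (h : (ρ * E * P).trace ≠ 0) : 0 < (P * ρ).trace.re := by
  obtain ⟨B, rfl⟩ := CStarAlgebra.nonneg_iff_eq_star_mul_self.mp hρ.nonneg
  have hBP : (B * P)ᴴ = P * star B := by rw [conjTranspose_mul, hP.eq]; rfl
  have htr : (P * (star B * B)).trace = (B * P * (B * P)ᴴ).trace := by
    rw [hBP, mul_assoc, ← mul_assoc P P, hP2, trace_mul_comm B, mul_assoc]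
  have hnonneg : 0 ≤ (B * P * (B * P)ᴴ).trace :=
    (posSemidef_self_mul_conjTranspose _).trace_nonneg
  rw [htr]
  refine lt_of_le_of_ne (Complex.nonneg_iff.1 hnonneg).1 fun hre => h ?_
  have hzero : B * P = 0 := by
    rw [← trace_mul_conjTranspose_self_eq_zero_iff, Complex.ext_iff]
    exact ⟨hre.symm, (Complex.nonneg_iff.1 hnonneg).2.symm⟩
  rw [mul_assoc, mul_assoc, trace_mul_comm, mul_assoc, mul_assoc, ← hBP, hzero,
    conjTranspose_zero, mul_zero, mul_zero, trace_zero]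

lemma integral_re_trace_Ns (hρ : ρ.IsHermitian) (hE : E.IsHermitian) (hP : P.IsHermitian)
    {s : ℝ} (hs : 0 < s) :
    ∫ x in Iio 0, ((Ns E s x)ᴴ * P * Ns E s x * ρ).trace.re =
      (E * P * E * ρ).trace.re * negReadingProb s 1
        + 2 * (E * P * (1 - E) * ρ).trace.re
          * (exp (-1 / (4 * s ^ 2)) * negReadingProb s (1 / 2))
        + ((1 - E) * P * (1 - E) * ρ).trace.re / 2 := by
  set a := (E * P * E * ρ).trace.re
  set b := (E * P * (1 - E) * ρ).trace.re
  set c := ((1 - E) * P * (1 - E) * ρ).trace.re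
  have hpt : ∀ x, ((Ns E s x)ᴴ * P * Ns E s x * ρ).trace.re = a * G s (x - 1) ^ 2
      + 2 * b * exp (-1 / (4 * s ^ 2)) * G s (x - 1 / 2) ^ 2 + c * G s x ^ 2 := fun x => by
    rw [re_trace_Ns_mul_mul hρ hE hP, G_sub_one_mul_G]
    ring
  have hint (μ : ℝ) : IntegrableOn (fun x => G s (x - μ) ^ 2) (Iio 0) :=
    ((integrable_G_sq hs).comp_sub_right μ).integrableOn
  have h₁ := (hint 1).const_mul a
  have h₂ := (hint (1 / 2)).const_mul (2 * b * exp (-1 / (4 * s ^ 2)))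
  simp_rw [hpt]
  rw [integral_add _ ((integrable_G_sq hs).integrableOn.const_mul c), integral_add h₁ h₂,
    integral_const_mul, integral_const_mul, integral_const_mul, integral_Iio_zero_G_sq hs,
    negReadingProb, negReadingProb]
  · ring
  · exact h₁.add h₂

end Trace

theorem anomalous_weak_value_violates_noncontextual_bound_general
    (n : ℕ) (ρ E P : Matrix (Fin n) (Fin n) ℂ)
    (hρ : ρ.PosSemidef)
    (hE : E.IsHermitian)
    (hP : P.IsHermitian) (hP2 : P * P = P)
    (hneg : (Matrix.trace (ρ * E * P)).re < 0) :
    ∃ s₀ > (0 : ℝ), ∀ s ≥ s₀,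
      pminus ρ E P s > 1 / 2 + pd s / (Matrix.trace (P * ρ)).re := by
  have hp : 0 < (P * ρ).trace.re :=
    re_trace_mul_pos (E := E) hρ hP hP2 fun h => hneg.ne (by simp [h])
  rw [re_trace_mul_mul_eq] at hneg
  obtain ⟨s₁, hs₁⟩ := eventually_atTop.1 (eventually_lt_negReadingProb_combination hneg)
  refine ⟨max s₁ 1, by positivity, fun s hs => ?_⟩
  have hs₀ : 0 < s := lt_of_lt_of_le one_pos (le_of_max_le_right hs)
  have hcomb := hs₁ s (le_of_max_le_left hs)
  rw [pminus, integral_re_trace_Ns hρ.isHermitian hE hP hs₀, gt_iff_lt, one_div_mul_eq_div,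
    lt_div_iff₀ hp, add_mul, div_mul_cancel₀ _ hp.ne', re_trace_mul_eq hρ.isHermitian hE hP]
  linarith

/-- condition 2c of the Lemma underlying Theorem 2. If `ρ` is a density
matrix and `E`, `P` orthogonal projections with anomalous negative weak value
`Re tr(ρ E P) < 0`, then there is `s₀ > 0` such that for all `s ≥ s₀` one has
`p^s_− > 1/2 + p^s_d / p_P`, where `p_P = tr(P ρ)`. -/
theorem anomalous_weak_value_violates_noncontextual_bound
    (n : ℕ) (ρ E P : Matrix (Fin n) (Fin n) ℂ)
    (hρ : ρ.PosSemidef) (hρtr : ρ.trace = 1)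
    (hE : E.IsHermitian) (hE2 : E * E = E)
    (hP : P.IsHermitian) (hP2 : P * P = P)
    (hneg : (Matrix.trace (ρ * E * P)).re < 0) :
    ∃ s₀ > (0 : ℝ), ∀ s ≥ s₀,
      pminus ρ E P s > 1 / 2 + pd s / (Matrix.trace (P * ρ)).re :=
  anomalous_weak_value_violates_noncontextual_bound_general n ρ E P hρ hE hP hP2 hneg
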